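/- arXiv:1706.00063 — 6 statements merged into one kernel-verified Lean document; each statement's English description precedes it below -/
import Mathlib

section
/- Let X be the n×n matrix whose first row is (x₁, x₂, …, xₙ) and whose i-th row (for i ≥ 2) is obtained from the first row by swapping entries x₁ and xᵢ (i.e., row i is (xᵢ, x₂, …, x_{i-1}, x₁, x_{i+1}, …, xₙ)). Then the multiset of eigenvalues of X is {x₁ + x₂ + ⋯ + xₙ, x₁ − x₂, x₁ − x₃, …, x₁ − xₙ}. -/
/-!
Subtracting row `i₀` from every other row and then adding all columns into column `i₀` is a
similarity transformation. The first step turns row `i ≠ i₀` of `X` into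
`(x i₀ - x i) (eᵢ - e_{i₀})`, whose entries sum to zero, so the second step leaves
`(x i₀ - x i) eᵢ`; row `i₀` becomes `(∑ x, x₂, …, xₙ)`. The result is upper triangular with
diagonal `∑ x, x₁ - x₂, …, x₁ - xₙ`.
-/

open Matrix Polynomial

namespace Matrix

variable {ι R : Type*} [Fintype ι]

theorem charpoly_mul_mul_of_mul_eq_one [DecidableEq ι] [CommRing R] {A B : Matrix ι ι R}
    (h : A * B = 1) (M : Matrix ι ι R) : (A * M * B).charpoly = M.charpoly := by
  rw [charpoly_mul_comm, ← mul_assoc, mul_eq_one_comm.mp h, one_mul]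

theorem roots_charpoly_of_isUpperTriangular [CommRing R] [IsDomain R] [LinearOrder ι]
    {M : Matrix ι ι R} (h : M.IsUpperTriangular) :
    M.charpoly.roots = Finset.univ.val.map fun i => M i i := by
  rw [charpoly_of_isUpperTriangular M h, Finset.prod_eq_multiset_prod,
    ← roots_multiset_prod_X_sub_C (Finset.univ.val.map fun i => M i i), Multiset.map_map]
  rfl

def swapMatrix [DecidableEq ι] (x : ι → R) (i₀ : ι) : Matrix ι ι R :=
  of fun i j => x (Equiv.swap i₀ i j)

section

variable [DecidableEq ι] [Ring R]

/-- Right multiplication by `1 + colOnesOffDiag i₀` adds all columns into column `i₀`; left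
multiplication by `1 - colOnesOffDiag i₀` subtracts row `i₀` from all other rows. -/
def colOnesOffDiag (i₀ : ι) : Matrix ι ι R :=
  of fun i j => if i ≠ i₀ ∧ j = i₀ then 1 else 0

theorem mul_colOnesOffDiag_apply (i₀ : ι) (M : Matrix ι ι R) (i j : ι) :
    (M * colOnesOffDiag i₀ : Matrix ι ι R) i j = if j = i₀ then ∑ l, M i l - M i i₀ else 0 := by
  split_ifs with hj
  · simp [mul_apply, colOnesOffDiag, hj, Finset.sum_ite, Finset.filter_ne']
  · simp [mul_apply, colOnesOffDiag, hj]

theorem colOnesOffDiag_mul_apply (i₀ : ι) (M : Matrix ι ι R) (i j : ι) :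
    (colOnesOffDiag i₀ * M : Matrix ι ι R) i j = if i = i₀ then 0 else M i₀ j := by
  split_ifs with hi <;> simp [mul_apply, colOnesOffDiag, hi]

theorem colOnesOffDiag_mul_self (i₀ : ι) :
    colOnesOffDiag i₀ * colOnesOffDiag i₀ = (0 : Matrix ι ι R) := by
  ext i j
  rw [colOnesOffDiag_mul_apply]
  split_ifs <;> simp [colOnesOffDiag, *]

theorem one_sub_colOnesOffDiag_mul_one_add (i₀ : ι) :
    (1 - colOnesOffDiag i₀) * (1 + colOnesOffDiag i₀) = (1 : Matrix ι ι R) := by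
  rw [sub_mul, mul_add, mul_add, colOnesOffDiag_mul_self]
  simp

theorem one_sub_mul_swapMatrix_mul_one_add_apply (x : ι → R) (i₀ i j : ι) :
    ((1 - colOnesOffDiag i₀) * swapMatrix x i₀ * (1 + colOnesOffDiag i₀) : Matrix ι ι R) i j =
      if i = i₀ then (if j = i₀ then ∑ k, x k else x j)
      else if j = i then x i₀ - x i else 0 := by
  have hrows : ∀ k l, ((1 - colOnesOffDiag i₀) * swapMatrix x i₀ : Matrix ι ι R) k l =
      if k = i₀ then x l else x (Equiv.swap i₀ k l) - x l := by
    intro k l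
    rw [sub_mul, one_mul, sub_apply, colOnesOffDiag_mul_apply]
    split_ifs with hk <;> simp [swapMatrix, hk]
  rw [mul_add, mul_one, add_apply, mul_colOnesOffDiag_apply]
  by_cases hi : i = i₀
  · subst i
    by_cases hj : j = i₀ <;> simp [hrows, hj]
  · have hsum : ∑ l, (x (Equiv.swap i₀ i l) - x l) = 0 := by
      rw [Finset.sum_sub_distrib, Equiv.sum_comp (Equiv.swap i₀ i) x, sub_self]
    simp only [hrows, if_neg hi, hsum]
    by_cases hj : j = i₀
    · simp [hj, Ne.symm hi]
    · by_cases hji : j = i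
      · simp [hji, hi]
      · simp [hj, hji, Equiv.swap_apply_of_ne_of_ne hj hji]

end

theorem roots_charpoly_swapMatrix [CommRing R] [IsDomain R] [LinearOrder ι] (x : ι → R) {i₀ : ι}
    (h₀ : IsBot i₀) :
    (swapMatrix x i₀).charpoly.roots =
      (∑ i, x i) ::ₘ (Finset.univ.erase i₀).val.map fun i => x i₀ - x i := by
  set T := (1 - colOnesOffDiag i₀) * swapMatrix x i₀ * (1 + colOnesOffDiag i₀)
  have hT : T.charpoly = (swapMatrix x i₀).charpoly :=
    charpoly_mul_mul_of_mul_eq_one (one_sub_colOnesOffDiag_mul_one_add i₀) _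
  have htri : T.IsUpperTriangular := fun i j (hji : j < i) => by
    simp only [T, one_sub_mul_swapMatrix_mul_one_add_apply]
    rw [if_neg ((h₀ j).trans_lt hji).ne', if_neg hji.ne]
  rw [← hT, roots_charpoly_of_isUpperTriangular htri,
    ← Multiset.cons_erase (Finset.mem_univ_val i₀), ← Finset.erase_val, Multiset.map_cons]
  congr 1
  · simp [T, one_sub_mul_swapMatrix_mul_one_add_apply]
  · refine Multiset.map_congr rfl fun i hi => ?_
    simp [T, one_sub_mul_swapMatrix_mul_one_add_apply, (Finset.mem_erase.mp hi).1]

end Matrix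

/-- the eigenvalue multiset of the matrix whose i-th row (i ≥ 2) is the
first row (x₁,…,xₙ) with entries x₁ and xᵢ swapped is {∑ xᵢ, x₁−x₂, …, x₁−xₙ}. -/
theorem stmt0 (n : ℕ) (hn : 0 < n) (x : Fin n → ℂ)
    (X : Matrix (Fin n) (Fin n) ℂ)
    (hX : ∀ i j, X i j =
      if i ≠ ⟨0, hn⟩ ∧ j = i then x ⟨0, hn⟩
      else if i ≠ ⟨0, hn⟩ ∧ j = ⟨0, hn⟩ then x i
      else x j) :
    X.charpoly.roots =
      (∑ i, x i) ::ₘ ((Finset.univ.erase (⟨0, hn⟩ : Fin n)).val.map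
        (fun i => x ⟨0, hn⟩ - x i)) := by
  have hswap : X = swapMatrix x ⟨0, hn⟩ := by
    ext i j
    rw [hX, swapMatrix, of_apply, Equiv.swap_apply_def]
    by_cases hj : j = ⟨0, hn⟩ <;> by_cases hji : j = i <;> simp_all
  rw [hswap]
  exact roots_charpoly_swapMatrix x fun _ => Fin.mk_le_of_le_val (Nat.zero_le _)
end

section
/- Let σ = (λ₁, …, λₙ) be a list of real numbers with λ₁ > 0 ≥ λ₂ ≥ ⋯ ≥ λₙ and λ₁ + ⋯ + λₙ ≥ 0 (a Suleĭmanova spectrum). Define x₁ = (λ₁ + ⋯ + λₙ)/n and xᵢ = x₁ − λᵢ for 2 ≤ i ≤ n. Then all xᵢ are nonnegative, and the matrix X whose first row is (x₁, …, xₙ) and whose i-th row (i ≥ 2) is the first row with entries x₁ and xᵢ swapped, is a nonnegative matrix whose multiset of eigenvalues is exactly {λ₁, …, λₙ}. -/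
open Matrix Polynomial

/-!
Row `i` of `X` is `x` with the entries `1` and `i` swapped, so every row sum of `X` is
`∑ x = λ₁`. Adding all other columns to the first and then subtracting the first row from the
others (conjugation by the unipotent matrix `1 + N`, `N` having ones in the first column below
the diagonal) therefore turns `X` into an upper triangular matrix with diagonal
`(∑ x, x₁ - x₂, …, x₁ - xₙ) = (λ₁, λ₂, …, λₙ)`.
-/

theorem Matrix.roots_charpoly_of_isUpperTriangular_s1 {ι R : Type*} [Fintype ι] [DecidableEq ι]
    [LinearOrder ι] [CommRing R] [IsDomain R] {M : Matrix ι ι R} (h : M.IsUpperTriangular) :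
    M.charpoly.roots = Finset.univ.val.map fun i => M i i := by
  rw [charpoly_of_isUpperTriangular M h, Finset.prod_eq_multiset_prod]
  simpa [Multiset.map_map, Function.comp_def] using
    roots_multiset_prod_X_sub_C (Finset.univ.val.map fun i => M i i)

namespace Suleimanova

variable {ι : Type*} [DecidableEq ι]

def permutativeMatrix {α : Type*} (z : ι) (x : ι → α) : Matrix ι ι α :=
  of fun i j => x (Equiv.swap z i j)

lemma permutativeMatrix_map {α β : Type*} (z : ι) (x : ι → α) (f : α → β) :
    (permutativeMatrix z x).map f = permutativeMatrix z (f ∘ x) :=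
  rfl

variable [Fintype ι] {R : Type*} [CommRing R]

def triangularForm (z : ι) (x : ι → R) : Matrix ι ι R :=
  of fun i j =>
    if i = j then (if i = z then ∑ k, x k else x z - x i) else if i = z then x j else 0

def offDiagColumn (z : ι) : Matrix ι ι R :=
  of fun i j => if j = z ∧ i ≠ z then 1 else 0

lemma sum_permutativeMatrix_row (z : ι) (x : ι → R) (i : ι) :
    ∑ j, permutativeMatrix z x i j = ∑ j, x j :=
  Equiv.sum_comp (Equiv.swap z i) x

lemma mul_offDiagColumn_apply (z : ι) (A : Matrix ι ι R) (i j : ι) :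
    (A * offDiagColumn z : Matrix ι ι R) i j = if j = z then ∑ k, A i k - A i z else 0 := by
  split_ifs with hj
  · simp [mul_apply, offDiagColumn, hj, Finset.sum_ite, Finset.filter_ne', Finset.sum_erase_eq_sub]
  · simp [mul_apply, offDiagColumn, hj]

lemma offDiagColumn_mul_apply (z : ι) (A : Matrix ι ι R) (i j : ι) :
    (offDiagColumn z * A : Matrix ι ι R) i j = if i = z then 0 else A z j := by
  split_ifs with hi <;> simp [mul_apply, offDiagColumn, hi]

lemma offDiagColumn_mul_self (z : ι) : offDiagColumn (R := R) z * offDiagColumn z = 0 := by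
  ext i j
  rw [offDiagColumn_mul_apply]
  simp [offDiagColumn]

lemma permutativeMatrix_mul_one_add_offDiagColumn (z : ι) (x : ι → R) :
    permutativeMatrix z x * (1 + offDiagColumn z) =
      (1 + offDiagColumn z) * triangularForm z x := by
  ext i j
  simp only [mul_add, add_mul, mul_one, one_mul, Matrix.add_apply, mul_offDiagColumn_apply,
    offDiagColumn_mul_apply, sum_permutativeMatrix_row]
  simp only [permutativeMatrix, triangularForm, of_apply, Equiv.swap_apply_def]
  split_ifs <;> grind

lemma charpoly_permutativeMatrix (z : ι) (x : ι → R) :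
    (permutativeMatrix z x).charpoly = (triangularForm z x).charpoly := by
  set N : Matrix ι ι R := offDiagColumn z
  have hN : (1 + N) * (1 - N) = 1 := by
    rw [mul_sub, mul_one, add_mul, one_mul, offDiagColumn_mul_self]
    abel
  have hX : permutativeMatrix z x = (1 + N) * (triangularForm z x * (1 - N)) := by
    rw [← mul_assoc, ← permutativeMatrix_mul_one_add_offDiagColumn, mul_assoc, hN, mul_one]
  rw [hX, charpoly_mul_comm, mul_assoc, mul_eq_one_comm.mp hN, mul_one]

lemma triangularForm_isUpperTriangular [LinearOrder ι] {z : ι} (hz : ∀ j, z ≤ j)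
    (x : ι → R) : (triangularForm z x).IsUpperTriangular := by
  intro i j hji
  have hij : i ≠ j := ne_of_gt hji
  have hiz : i ≠ z := fun h => (hji.trans_le (h ▸ hz j)).false
  simp [triangularForm, hij, hiz]

lemma roots_charpoly_permutativeMatrix [IsDomain R] [LinearOrder ι] {z : ι} (hz : ∀ j, z ≤ j)
    (x : ι → R) :
    (permutativeMatrix z x).charpoly.roots =
      Finset.univ.val.map fun i => if i = z then ∑ k, x k else x z - x i := by
  rw [charpoly_permutativeMatrix,
    roots_charpoly_of_isUpperTriangular_s1 (triangularForm_isUpperTriangular hz x)]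
  simp [triangularForm]

end Suleimanova

open Suleimanova

theorem stmt1_general (n : ℕ) (hn : 0 < n) (l : Fin n → ℝ)
    (hnonpos : ∀ i, i ≠ ⟨0, hn⟩ → l i ≤ 0)
    (hsum : 0 ≤ ∑ i, l i)
    (x : Fin n → ℝ)
    (hx : ∀ i, x i = if i = ⟨0, hn⟩ then (∑ j, l j) / n
      else (∑ j, l j) / n - l i)
    (X : Matrix (Fin n) (Fin n) ℝ)
    (hX : ∀ i j, X i j =
      if i ≠ ⟨0, hn⟩ ∧ j = i then x ⟨0, hn⟩
      else if i ≠ ⟨0, hn⟩ ∧ j = ⟨0, hn⟩ then x i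
      else x j) :
    (∀ i, 0 ≤ x i) ∧ (∀ i j, 0 ≤ X i j) ∧
      (X.map Complex.ofReal).charpoly.roots =
        Finset.univ.val.map (fun i => (l i : ℂ)) := by
  set z : Fin n := ⟨0, hn⟩
  have hxz : x z = (∑ j, l j) / n := by simp [hx]
  have hl : ∀ i, i ≠ z → l i = x z - x i := fun i hi => by rw [hx i, if_neg hi, hxz]; ring
  have hlz : l z = ∑ k, x k := by
    have hsum_zero : ∑ k, (x z - l k) = 0 := by
      rw [Finset.sum_sub_distrib, Finset.sum_const, Finset.card_fin, nsmul_eq_mul, hxz,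
        mul_div_cancel₀ _ (by positivity), sub_self]
    have hsum_diff : ∑ k, (x k - (x z - l k)) = l z := by
      rw [Finset.sum_eq_single z (fun k _ hk => by rw [hl k hk]; ring) (by simp)]
      ring
    rw [← hsum_diff, Finset.sum_sub_distrib, hsum_zero, sub_zero]
  have hxz_nonneg : 0 ≤ x z := hxz ▸ by positivity
  have hx_nonneg : ∀ i, 0 ≤ x i := fun i => by
    by_cases hi : i = z
    · exact hi ▸ hxz_nonneg
    · linarith [hl i hi, hnonpos i hi]
  have hX_eq : X = permutativeMatrix z x := by
    ext i j
    rw [hX]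
    simp only [permutativeMatrix, of_apply, Equiv.swap_apply_def]
    split_ifs <;> grind
  refine ⟨hx_nonneg, fun i j => hX_eq ▸ hx_nonneg _, ?_⟩
  rw [hX_eq, permutativeMatrix_map, roots_charpoly_permutativeMatrix (fun j => Nat.zero_le j.val)]
  congr 1
  funext i
  split_ifs with hi
  · simp [hi, hlz]
  · simp [hl i hi]

/-- the Suleĭmanova construction gives a nonnegative permutative matrix
realizing a Suleĭmanova spectrum. -/
theorem stmt1 (n : ℕ) (hn : 0 < n) (l : Fin n → ℝ)
    (hpos : l ⟨0, hn⟩ > 0)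
    (hnonpos : ∀ i, i ≠ ⟨0, hn⟩ → l i ≤ 0)
    (hmono : ∀ i j : Fin n, i ≤ j → l j ≤ l i)
    (hsum : 0 ≤ ∑ i, l i)
    (x : Fin n → ℝ)
    (hx : ∀ i, x i = if i = ⟨0, hn⟩ then (∑ j, l j) / n
      else (∑ j, l j) / n - l i)
    (X : Matrix (Fin n) (Fin n) ℝ)
    (hX : ∀ i j, X i j =
      if i ≠ ⟨0, hn⟩ ∧ j = i then x ⟨0, hn⟩
      else if i ≠ ⟨0, hn⟩ ∧ j = ⟨0, hn⟩ then x i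
      else x j) :
    (∀ i, 0 ≤ x i) ∧ (∀ i j, 0 ≤ X i j) ∧
      (X.map Complex.ofReal).charpoly.roots =
        Finset.univ.val.map (fun i => (l i : ℂ)) :=
  stmt1_general n hn l hnonpos hsum x hx X hX
end

section
/- Let S = (s_{ij}) and C = (c_{ij}) be real n×n matrices with |c_{ij}| ≤ s_{ij} for all i, j, and let 0 ≤ γ ≤ 1. Then the 2n×2n matrix M_γ with 2×2 blocks [[ (s_{ij}+γc_{ij})/2, (s_{ij}−γc_{ij})/2 ], [ (s_{ij}−γc_{ij})/2, (s_{ij}+γc_{ij})/2 ]] is entrywise nonnegative, and its characteristic polynomial is the product of the characteristic polynomials of S and γC. In particular, the eigenvalue multiset of M_γ is σ(S) ∪ γ·σ(C). -/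
open Matrix Polynomial

lemma charpoly_conj_aux {m : Type*} [Fintype m] [DecidableEq m]
    (P Q A : Matrix m m ℝ) (hQP : Q * P = 1) :
    (Q * A * P).charpoly = A.charpoly := by
  have hQP' : (Q.map (C : ℝ → ℝ[X])) * (P.map C) = 1 := by
    have := congrArg (fun N => N.map (C : ℝ → ℝ[X])) hQP
    simpa [Matrix.map_mul] using this
  have key : charmatrix (Q * A * P) = Q.map C * charmatrix A * P.map C := by
    unfold charmatrix
    rw [Matrix.mul_sub, Matrix.sub_mul]
    congr 1
    · rw [mul_assoc, Matrix.scalar_commute (X : ℝ[X]) (fun r' => Commute.all _ _),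
        ← mul_assoc, hQP', one_mul]
    · simp [RingHom.mapMatrix_apply, Matrix.map_mul, mul_assoc]
  have h2 : (Q.map (C : ℝ → ℝ[X])).det * (P.map C).det = 1 := by
    rw [← det_mul, hQP', det_one]
  rw [Matrix.charpoly, key, det_mul, det_mul, Matrix.charpoly]
  calc (Q.map (C : ℝ → ℝ[X])).det * (charmatrix A).det * (P.map C).det
      = ((Q.map C).det * (P.map C).det) * (charmatrix A).det := by ring
    _ = (charmatrix A).det := by rw [h2, one_mul]

/-- with |c_{ij}| ≤ s_{ij} and 0 ≤ γ ≤ 1, the 2×2-block matrix M_γ is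
nonnegative and char(M_γ) = char(S)·char(γC). -/
theorem stmt5 (n : ℕ) (s c : Fin n → Fin n → ℝ)
    (h : ∀ i j, |c i j| ≤ s i j) (γ : ℝ) (h0 : 0 ≤ γ) (h1 : γ ≤ 1)
    (M : Matrix (Fin n × Fin 2) (Fin n × Fin 2) ℝ)
    (hM : ∀ (i j : Fin n) (p q : Fin 2), M (i, p) (j, q) =
      if p = q then (s i j + γ * c i j) / 2 else (s i j - γ * c i j) / 2) :
    (∀ u v, 0 ≤ M u v) ∧
      M.charpoly = (Matrix.of s).charpoly * (γ • Matrix.of c).charpoly := by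
  constructor
  · rintro ⟨i, p⟩ ⟨j, q⟩
    rw [hM]
    have h3 := le_abs_self (c i j)
    have h4 := neg_abs_le (c i j)
    have h5 := h i j
    have h6 : 0 ≤ s i j := (abs_nonneg _).trans h5
    split <;> nlinarith
  · set A : Matrix (Fin n) (Fin n) ℝ := Matrix.of fun i j => (s i j + γ * c i j) / 2 with hA
    set B : Matrix (Fin n) (Fin n) ℝ := Matrix.of fun i j => (s i j - γ * c i j) / 2 with hB
    let e : (Fin n ⊕ Fin n) ≃ (Fin n × Fin 2) :=
      { toFun := Sum.elim (fun i => (i, 0)) (fun i => (i, 1))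
        invFun := fun p => if p.2 = 0 then Sum.inl p.1 else Sum.inr p.1
        left_inv := by rintro (i | i) <;> simp
        right_inv := by
          rintro ⟨i, p⟩
          fin_cases p <;> simp }
    have hMre : M = reindex e e (fromBlocks A B B A) := by
      ext ⟨i, p⟩ ⟨j, q⟩
      rw [hM]
      fin_cases p <;> fin_cases q <;>
        simp [e, hA, hB, Matrix.reindex_apply, Matrix.submatrix_apply, fromBlocks]
    rw [hMre, charpoly_reindex]
    set P : Matrix (Fin n ⊕ Fin n) (Fin n ⊕ Fin n) ℝ := fromBlocks 1 1 1 (-1) with hP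
    set Q : Matrix (Fin n ⊕ Fin n) (Fin n ⊕ Fin n) ℝ := (1 / 2 : ℝ) • P with hQ
    have hQP : Q * P = 1 := by
      rw [hQ, Matrix.smul_mul, hP, fromBlocks_multiply]
      refine Matrix.ext ?_
      rintro (i | i) (j | j) <;>
        simp [fromBlocks, Matrix.one_apply, Matrix.add_apply, Matrix.smul_apply,
          Matrix.neg_apply, Matrix.mul_apply] <;> split <;> norm_num
    have hprod : Q * fromBlocks A B B A * P
        = fromBlocks (Matrix.of s) 0 0 (γ • Matrix.of c) := by
      rw [hQ, Matrix.smul_mul, Matrix.smul_mul, hP, fromBlocks_multiply, fromBlocks_multiply,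
        fromBlocks_smul]
      refine Matrix.ext ?_
      rintro (i | i) (j | j) <;>
        simp [hA, hB, fromBlocks, Matrix.add_apply, Matrix.smul_apply, Matrix.sub_apply,
          Matrix.neg_apply] <;> ring
    calc (fromBlocks A B B A).charpoly
        = (Q * fromBlocks A B B A * P).charpoly := (charpoly_conj_aux P Q _ hQP).symm
      _ = (fromBlocks (Matrix.of s) 0 0 (γ • Matrix.of c)).charpoly := by rw [hprod]
      _ = (Matrix.of s).charpoly * (γ • Matrix.of c).charpoly :=
          Matrix.charpoly_fromBlocks_zero₂₁ _ _ _
end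

section
/- Let S and C be real n×n matrices with |c_{ij}| ≤ s_{ij} for all i,j and 0 ≤ γ ≤ 1. Then the 2n×2n block matrix M_{−γ} with (i,j) block [[ (s_{ij}−γc_{ij})/2, (s_{ij}+γc_{ij})/2 ], [ (s_{ij}+γc_{ij})/2, (s_{ij}−γc_{ij})/2 ]] is nonnegative and its eigenvalue multiset is σ(S) ∪ (−γ)·σ(C). -/
/-!
Ordering the indices `(i, p)` by `p` first turns `M` into the block matrix `[[A, B], [B, A]]` with
`A = (S - γC)/2` and `B = (S + γC)/2`. Conjugating by `[[1, 0], [1, 1]]` makes it block triangular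
with diagonal blocks `A - B` and `A + B`, so `χ_M = χ_(A+B) χ_(A-B) = χ_S χ_(-γC)`, and scaling a
matrix scales its eigenvalues. Nonnegativity is `|γ c_ij| ≤ |c_ij| ≤ s_ij`.
-/

open Matrix Polynomial

namespace Matrix

variable {m : Type*} [Fintype m] [DecidableEq m]

theorem det_fromBlocks_self {R : Type*} [CommRing R] (A B : Matrix m m R) :
    (fromBlocks A B B A).det = (A + B).det * (A - B).det := by
  have hconj : fromBlocks 1 0 1 1 * fromBlocks A B B A * fromBlocks 1 0 (-1) 1 =
      fromBlocks (A - B) B 0 (B + A) := by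
    simp only [fromBlocks_multiply]
    congr 1 <;> noncomm_ring
  have := congrArg det hconj
  simp only [det_mul, det_fromBlocks_zero₁₂, det_fromBlocks_zero₂₁, det_one, one_mul,
    mul_one] at this
  rw [this, add_comm, mul_comm]

theorem charmatrix_add {R : Type*} [CommRing R] (A B : Matrix m m R) :
    charmatrix (A + B) = charmatrix A - B.map C := by
  simp [charmatrix, sub_sub, Matrix.map_add]

theorem charmatrix_sub {R : Type*} [CommRing R] (A B : Matrix m m R) :
    charmatrix (A - B) = charmatrix A + B.map C := by
  simp [charmatrix, sub_add, Matrix.map_sub]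

theorem charpoly_fromBlocks_self {R : Type*} [CommRing R] (A B : Matrix m m R) :
    (fromBlocks A B B A).charpoly = (A + B).charpoly * (A - B).charpoly := by
  rw [charpoly, charmatrix_fromBlocks, det_fromBlocks_self, charpoly, charpoly, charmatrix_add,
    charmatrix_sub, sub_neg_eq_add, sub_eq_add_neg]

theorem charpoly_smul_of_ne_zero {K : Type*} [Field K] (A : Matrix m m K) {a : K} (ha : a ≠ 0) :
    (a • A).charpoly = C (a ^ Fintype.card m) * A.charpoly.comp (C a⁻¹ * X) := by
  rw [charpoly, charpoly, ← coe_compRingHom_apply, RingHom.map_det, map_pow, ← det_smul]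
  congr 1
  ext i j : 1
  obtain rfl | hij := eq_or_ne i j
  · simp [mul_sub, ← mul_assoc, ← C_mul, ha, -map_mul]
  · simp [hij]

theorem roots_charpoly_smul {K : Type*} [Field K] [IsAlgClosed K] (A : Matrix m m K) (a : K) :
    (a • A).charpoly.roots = A.charpoly.roots.map (a * ·) := by
  obtain rfl | ha := eq_or_ne a 0
  · -- both sides are `card m` copies of `0`; this needs `A.charpoly` to split
    simp [Multiset.map_const', IsAlgClosed.card_roots_eq_natDegree, Multiset.nsmul_singleton]
  · rw [charpoly_smul_of_ne_zero A ha, roots_C_mul _ (pow_ne_zero _ ha)]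
    simpa using roots_comp_C_mul_X_add_C A.charpoly a⁻¹ 0 (isUnit_iff_ne_zero.mpr (inv_ne_zero ha))

theorem charpoly_eq_of_apply_eq_ite {R : Type*} [CommRing R] (A B : Matrix m m R)
    (M : Matrix (m × Fin 2) (m × Fin 2) R)
    (hM : ∀ i j p q, M (i, p) (j, q) = if p = q then A i j else B i j) :
    M.charpoly = (A + B).charpoly * (A - B).charpoly := by
  let e : m × Fin 2 ≃ m ⊕ m := (Equiv.prodComm _ _).trans
    ((finTwoEquiv.prodCongr (Equiv.refl m)).trans (Equiv.boolProdEquivSum m))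
  have hblocks : reindex e e M = fromBlocks A B B A := by
    ext (i | i) (j | j) <;> simp [e, hM]
  rw [← charpoly_reindex e, hblocks, charpoly_fromBlocks_self]

end Matrix

/-- the block matrix M_{−γ} is nonnegative with eigenvalue multiset
σ(S) ∪ (−γ)·σ(C). -/
theorem stmt6 (n : ℕ) (s c : Fin n → Fin n → ℝ)
    (h : ∀ i j, |c i j| ≤ s i j) (γ : ℝ) (h0 : 0 ≤ γ) (h1 : γ ≤ 1)
    (M : Matrix (Fin n × Fin 2) (Fin n × Fin 2) ℝ)
    (hM : ∀ (i j : Fin n) (p q : Fin 2), M (i, p) (j, q) =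
      if p = q then (s i j - γ * c i j) / 2 else (s i j + γ * c i j) / 2) :
    (∀ u v, 0 ≤ M u v) ∧
      (M.map Complex.ofReal).charpoly.roots =
        ((Matrix.of s).map Complex.ofReal).charpoly.roots +
          Multiset.map (fun z => -(γ : ℂ) * z)
            ((Matrix.of c).map Complex.ofReal).charpoly.roots := by
  refine ⟨?_, ?_⟩
  · rintro ⟨i, p⟩ ⟨j, q⟩
    have hγc : |γ * c i j| ≤ s i j := by
      rw [abs_mul, abs_of_nonneg h0]
      exact (mul_le_of_le_one_left (abs_nonneg _) h1).trans (h i j)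
    obtain ⟨hlo, hhi⟩ := abs_le.mp hγc
    rw [hM]
    split_ifs <;> linarith
  · let A : Matrix (Fin n) (Fin n) ℝ := of fun i j => (s i j - γ * c i j) / 2
    let B : Matrix (Fin n) (Fin n) ℝ := of fun i j => (s i j + γ * c i j) / 2
    have hsum : A + B = of s := by
      ext i j
      simp only [A, B, Matrix.add_apply, of_apply]
      ring
    have hdiff : A - B = -γ • of c := by
      ext i j
      simp only [A, B, Matrix.sub_apply, Matrix.smul_apply, of_apply, smul_eq_mul]
      ring
    have hchar : M.charpoly = (of s).charpoly * (-γ • of c).charpoly := by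
      rw [← hsum, ← hdiff]
      exact charpoly_eq_of_apply_eq_ite A B M hM
    have hmap {ι : Type} [Fintype ι] [DecidableEq ι] (N : Matrix ι ι ℝ) :
        (N.map Complex.ofReal).charpoly = N.charpoly.map Complex.ofRealHom :=
      charpoly_map N Complex.ofRealHom
    rw [hmap, hchar, Polynomial.map_mul, ← hmap, ← hmap,
      roots_mul (mul_ne_zero (charpoly_monic _).ne_zero (charpoly_monic _).ne_zero),
      map_smul' _ _ _ Complex.ofReal_mul, Complex.ofReal_neg, roots_charpoly_smul]
end

section
/- Let K be an algebraically closed field of characteristic 0 and let A be a (2n+1)×(2n+1) matrix partitioned so that for 1 ≤ i,j ≤ n the (i,j) block is the 2×2 symmetric matrix [[a_{ij}, b_{ij}],[b_{ij}, a_{ij}]], the (i, n+1) block is the column (a_{i,n+1}, a_{i,n+1})ᵀ, the (n+1, j) block is the row (a_{n+1,j}, b_{n+1,j}), and the (n+1, n+1) entry is a_{n+1,n+1}. Define the (n+1)×(n+1) matrix S by s_{ij} = a_{ij}+b_{ij} for 1 ≤ i,j ≤ n, s_{i,n+1} = a_{i,n+1}, s_{n+1,j} = a_{n+1,j}+b_{n+1,j},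 s_{n+1,n+1} = a_{n+1,n+1}, and the n×n matrix C by c_{ij} = a_{ij} − b_{ij}. Then the eigenvalue multiset of A equals the union of the eigenvalue multisets of S and C. -/
/-!
Vectors taking the same value at the coordinates `(i, 0)` and `(i, 1)` for every `i` form an
`A`-invariant subspace, on which `A` acts by `S` (each column pair of `A` sums to `a + b`),
while on the quotient, spanned by the images of the `e (i, 1)`, `A` acts by `C`. So in the basis
`e (i, 0) + e (i, 1)`, `e (inr ())`, `e (i, 1)` the matrix `A` becomes `fromBlocks S b 0 C`.
-/

open Matrix Polynomial

theorem Matrix.charpoly_eq_of_mul_eq_mul {R ι κ : Type*} [CommRing R]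
    [Fintype ι] [DecidableEq ι] [Fintype κ] [DecidableEq κ]
    {A : Matrix ι ι R} {M : Matrix κ κ R} {P : Matrix ι κ R} {Q : Matrix κ ι R}
    (hPQ : P * Q = 1) (hQP : Q * P = 1) (hcard : Fintype.card ι = Fintype.card κ)
    (h : A * P = P * M) : A.charpoly = M.charpoly := by
  have hA : A = P * (M * Q) := by
    rw [← Matrix.mul_assoc, ← h, Matrix.mul_assoc, hPQ, Matrix.mul_one]
  have key := charpoly_mul_comm' P (M * Q)
  rw [Matrix.mul_assoc M, hQP, Matrix.mul_one, hcard, ← hA] at key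
  exact (isRegular_X_pow _).left key

namespace SymmetricBlock

variable (R : Type*) [Ring R] (n : ℕ)

def basisChange : Matrix (Fin n × Fin 2 ⊕ Unit) (Fin (n + 1) ⊕ Fin n) R :=
  fromBlocks (of fun x j => if j = x.1.castSucc then 1 else 0)
    (of fun x k => if x = (k, 1) then 1 else 0)
    (of fun _ j => if j = Fin.last n then 1 else 0) 0

def basisChangeInv : Matrix (Fin (n + 1) ⊕ Fin n) (Fin n × Fin 2 ⊕ Unit) R :=
  fromBlocks (of fun j x => if j = x.1.castSucc ∧ x.2 = 0 then 1 else 0)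
    (of fun j _ => if j = Fin.last n then 1 else 0)
    (of fun k x => if k = x.1 then (if x.2 = 0 then -1 else 1) else 0) 0

theorem basisChangeInv_mul_basisChange : basisChangeInv R n * basisChange R n = 1 := by
  rw [basisChangeInv, basisChange, fromBlocks_multiply, ← fromBlocks_one]
  congr 1 <;> ext i j
  · induction i using Fin.lastCases <;> induction j using Fin.lastCases <;>
      simp [Matrix.mul_apply, Fintype.sum_prod_type, Matrix.one_apply, ite_and,
        (Fin.castSucc_ne_last _).symm]
  all_goals simp [Matrix.mul_apply, Fintype.sum_prod_type, Matrix.one_apply, ite_and]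

theorem basisChange_mul_basisChangeInv : basisChange R n * basisChangeInv R n = 1 := by
  rw [basisChangeInv, basisChange, fromBlocks_multiply, ← fromBlocks_one]
  congr 1
  · ext ⟨i, p⟩ ⟨j, q⟩
    fin_cases p <;> fin_cases q <;> simp [Matrix.mul_apply, Matrix.one_apply, ite_and, eq_comm]
  all_goals ext
  all_goals simp [Matrix.mul_apply, ite_and, (Fin.castSucc_ne_last _).symm]

end SymmetricBlock

open SymmetricBlock in
theorem stmt11_general (K : Type*) [Field K] (n : ℕ)
    (a : Fin (n + 1) → Fin (n + 1) → K) (b : Fin (n + 1) → Fin n → K)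
    (A : Matrix (Fin n × Fin 2 ⊕ Unit) (Fin n × Fin 2 ⊕ Unit) K)
    (hA1 : ∀ (i j : Fin n) (p q : Fin 2),
      A (Sum.inl (i, p)) (Sum.inl (j, q)) =
        if p = q then a i.castSucc j.castSucc else b i.castSucc j)
    (hA2 : ∀ (i : Fin n) (p : Fin 2) (u : Unit),
      A (Sum.inl (i, p)) (Sum.inr u) = a i.castSucc (Fin.last n))
    (hA3 : ∀ (u : Unit) (j : Fin n) (q : Fin 2),
      A (Sum.inr u) (Sum.inl (j, q)) =
        if q = 0 then a (Fin.last n) j.castSucc else b (Fin.last n) j)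
    (hA4 : ∀ u v : Unit, A (Sum.inr u) (Sum.inr v) = a (Fin.last n) (Fin.last n))
    (S : Matrix (Fin (n + 1)) (Fin (n + 1)) K)
    (hS1 : ∀ (i : Fin (n + 1)) (j : Fin n),
      S i j.castSucc = a i j.castSucc + b i j)
    (hS2 : ∀ i, S i (Fin.last n) = a i (Fin.last n))
    (C : Matrix (Fin n) (Fin n) K)
    (hC : ∀ i j, C i j = a i.castSucc j.castSucc - b i.castSucc j) :
    A.charpoly = S.charpoly * C.charpoly := by
  have hA : A * basisChange K n = basisChange K n * fromBlocks S (of b) 0 C := by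
    rw [basisChange]
    ext (⟨i, p⟩ | u) (j | k)
    · induction j using Fin.lastCases <;> fin_cases p <;>
        simp [Matrix.mul_apply, Fintype.sum_sum_type, Fintype.sum_prod_type,
          (Fin.castSucc_ne_last _).symm, hA1, hA2, hS1, hS2, add_comm]
    · fin_cases p <;> simp [Matrix.mul_apply, Fintype.sum_sum_type, hA1, hC]
    · induction j using Fin.lastCases <;>
        simp [Matrix.mul_apply, Fintype.sum_sum_type, Fintype.sum_prod_type,
          (Fin.castSucc_ne_last _).symm, hA3, hA4, hS1, hS2, add_comm]
    · simp [Matrix.mul_apply, Fintype.sum_sum_type, hA3]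
  have hcard : Fintype.card (Fin n × Fin 2 ⊕ Unit) = Fintype.card (Fin (n + 1) ⊕ Fin n) := by
    simp only [Fintype.card_sum, Fintype.card_prod, Fintype.card_fin, Fintype.card_unit]
    ring
  rw [charpoly_eq_of_mul_eq_mul (basisChange_mul_basisChangeInv K n)
    (basisChangeInv_mul_basisChange K n) hcard hA, charpoly_fromBlocks_zero₂₁]

/-- odd-order block decomposition: σ(A) = σ(S) ∪ σ(C), i.e.
char(A) = char(S)·char(C). -/
theorem stmt11 (K : Type*) [Field K] [IsAlgClosed K] [CharZero K] (n : ℕ)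
    (a : Fin (n + 1) → Fin (n + 1) → K) (b : Fin (n + 1) → Fin n → K)
    (A : Matrix (Fin n × Fin 2 ⊕ Unit) (Fin n × Fin 2 ⊕ Unit) K)
    (hA1 : ∀ (i j : Fin n) (p q : Fin 2),
      A (Sum.inl (i, p)) (Sum.inl (j, q)) =
        if p = q then a i.castSucc j.castSucc else b i.castSucc j)
    (hA2 : ∀ (i : Fin n) (p : Fin 2) (u : Unit),
      A (Sum.inl (i, p)) (Sum.inr u) = a i.castSucc (Fin.last n))
    (hA3 : ∀ (u : Unit) (j : Fin n) (q : Fin 2),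
      A (Sum.inr u) (Sum.inl (j, q)) =
        if q = 0 then a (Fin.last n) j.castSucc else b (Fin.last n) j)
    (hA4 : ∀ u v : Unit, A (Sum.inr u) (Sum.inr v) = a (Fin.last n) (Fin.last n))
    (S : Matrix (Fin (n + 1)) (Fin (n + 1)) K)
    (hS1 : ∀ (i : Fin (n + 1)) (j : Fin n),
      S i j.castSucc = a i j.castSucc + b i j)
    (hS2 : ∀ i, S i (Fin.last n) = a i (Fin.last n))
    (C : Matrix (Fin n) (Fin n) K)
    (hC : ∀ i j, C i j = a i.castSucc j.castSucc - b i.castSucc j) :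
    A.charpoly = S.charpoly * C.charpoly :=
  stmt11_general K n a b A hA1 hA2 hA3 hA4 S hS1 hS2 C hC
end

section
/- Let n = 2m+2 and let S and C be n×n real circulant matrices with eigenvalue lists σ₁ = (λ₁, λ₂, …, λ̄₂) and σ₂ = (β₁, β₂, …, β̄₂) (in Fourier ordering), such that S, S+C, and S−C are nonnegative. Let t₁ ≥ |t₂|. Then there exist nonnegative circulant matrices realizing the Guo-perturbed lists σ_{s,t₁} = (λ₁+t₁, λ₂, …, λ_{m+1}, λ_{m+2}±t₁, λ̄_{m+1}, …, λ̄₂) and σ_{c,t₂} = (β₁+t₂, β₂, …, β_{m+1}, β_{m+2}±t₂, β̄_{m+1}, …, β̄₂), and moreover the matrices S̃+C̃ and S̃−C̃ built from these perturbed lists via the inverse discrete Fourier transform are nonnegative, so the 2n×2n block construction yields a nonnegative permutative matrix with eigenvalue multiset σ_{s,t₁} ∪ σ_{c,t₂}. -/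
open Matrix Polynomial Complex

namespace Stmt18

/-- First row recovered from an eigenvalue list by the inverse DFT: r = (1/n)·F̄·σ. -/
noncomputable def idftRow (n : ℕ) (σ : Fin n → ℂ) : Fin n → ℂ :=
  fun j => (1 / (n : ℂ)) * ∑ k : Fin n,
    (starRingEnd ℂ) (Complex.exp (2 * Real.pi * Complex.I / n) ^ ((k : ℕ) * (j : ℕ))) * σ k

/-- Circulant matrix with first row r. -/
def circ {n : ℕ} (r : Fin n → ℂ) : Matrix (Fin n) (Fin n) ℂ :=
  Matrix.of fun i j => r (j - i)

/-- A complex number which is real and nonnegative. -/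
def NN (z : ℂ) : Prop := z.im = 0 ∧ 0 ≤ z.re

end Stmt18

open Stmt18

/-!
The inverse DFT is linear, and since `ω ^ (m + 1) = -1` for `ω = exp (2πi / (2m + 2))`, Guo's
perturbation of the eigenvalues at positions `0` and `m + 1` adds the real vector
`τ (1 + ε (-1) ^ j) / n` to the first row, which is nonnegative for `τ ≥ 0`. The perturbation is
linear in `τ` and `t₁, t₁ + t₂, t₁ - t₂ ≥ 0`, so `S̃` and `S̃ ± C̃` stay nonnegative.

The Fourier matrix `F = (ω ^ (j k))` satisfies `circ r * F = F * diagonal (r ᵥ* F)`, so by Fourier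
inversion `circ (idftRow σ)` is similar to `diagonal σ`, and `F ⊗ [[1, 1], [1, -1]]` conjugates
the block matrix `[[(S̃ + C̃) / 2, (S̃ - C̃) / 2], [(S̃ - C̃) / 2, (S̃ + C̃) / 2]]` to a diagonal matrix
carrying `σs` and `σc`. Every row of that block matrix is its first row composed with a
translation of `Fin n × Fin 2`.
-/

namespace Stmt18

open Real Kronecker ComplexOrder

section Charpoly

variable {R N : Type*} [CommRing R] [Fintype N] [DecidableEq N]

lemma charpoly_eq_of_mul_eq_mul {A B P : Matrix N N R} (hP : IsUnit P.det)
    (h : A * P = P * B) : A.charpoly = B.charpoly := by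
  have hA : A = P * (B * P⁻¹) := by
    rw [← mul_assoc, ← h, mul_assoc, mul_nonsing_inv _ hP, mul_one]
  rw [hA, charpoly_mul_comm, mul_assoc, nonsing_inv_mul _ hP, mul_one]

lemma roots_charpoly_diagonal [IsDomain R] (d : N → R) :
    (diagonal d).charpoly.roots = Finset.univ.val.map d := by
  rw [charpoly_diagonal, Finset.prod_eq_multiset_prod]
  simpa only [Multiset.map_map, Function.comp_def] using
    roots_multiset_prod_X_sub_C (Finset.univ.val.map d)

lemma roots_charpoly_of_mul_eq_mul_diagonal [IsDomain R] {A P : Matrix N N R} {d : N → R}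
    (hP : IsUnit P.det) (h : A * P = P * diagonal d) :
    A.charpoly.roots = Finset.univ.val.map d := by
  rw [charpoly_eq_of_mul_eq_mul hP h, roots_charpoly_diagonal]

end Charpoly

section DFT

variable {n : ℕ}

noncomputable def fourierRoot (n : ℕ) : ℂ := exp (2 * π * I / n)

noncomputable def dftMatrix (n : ℕ) : Matrix (Fin n) (Fin n) ℂ :=
  of fun j k => fourierRoot n ^ ((j : ℕ) * (k : ℕ))

lemma isPrimitiveRoot_fourierRoot [NeZero n] : IsPrimitiveRoot (fourierRoot n) n :=
  isPrimitiveRoot_exp n (NeZero.ne n)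

lemma star_fourierRoot : star (fourierRoot n) = (fourierRoot n)⁻¹ := by
  rw [fourierRoot, ← Complex.exp_neg, star_def, ← exp_conj]
  simp [map_ofNat, neg_div]

lemma sum_fin_pow_of_pow_eq_one {K : Type*} [Field K] [DecidableEq K] {z : K} (hz : z ^ n = 1) :
    ∑ k : Fin n, z ^ (k : ℕ) = if z = 1 then (n : K) else 0 := by
  rw [Fin.sum_univ_eq_sum_range (z ^ ·)]
  split_ifs with h
  · simp [h]
  · rw [geom_sum_eq h, hz, sub_self, zero_div]

lemma dftMatrix_transpose : (dftMatrix n)ᵀ = dftMatrix n := by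
  ext j k
  simp [dftMatrix, mul_comm]

lemma dftMatrix_mul_conjTranspose [NeZero n] :
    dftMatrix n * (dftMatrix n)ᴴ = (n : ℂ) • 1 := by
  have hω := isPrimitiveRoot_fourierRoot (n := n)
  ext i j
  set z := fourierRoot n ^ (i : ℕ) * (fourierRoot n ^ (j : ℕ))⁻¹
  have hz : z ^ n = 1 := by
    rw [mul_pow, inv_pow, ← pow_mul, ← pow_mul, mul_comm _ n, mul_comm _ n, pow_mul, pow_mul,
      hω.pow_eq_one, one_pow, one_pow, inv_one, mul_one]
  have hz1 : z = 1 ↔ i = j := by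
    rw [mul_inv_eq_one₀ (pow_ne_zero _ (hω.ne_zero (NeZero.ne n))), Fin.ext_iff]
    exact ⟨fun h => hω.pow_inj i.isLt j.isLt h, fun h => by rw [h]⟩
  calc (dftMatrix n * (dftMatrix n)ᴴ) i j = ∑ k : Fin n, z ^ (k : ℕ) := by
        simp only [mul_apply, conjTranspose_apply, dftMatrix, of_apply, star_pow,
          star_fourierRoot, z, mul_pow, inv_pow, ← pow_mul]
    _ = ((n : ℂ) • (1 : Matrix (Fin n) (Fin n) ℂ)) i j := by
        rw [sum_fin_pow_of_pow_eq_one hz, Matrix.smul_apply, one_apply]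
        simp [hz1]

lemma idftRow_eq_smul_mulVec (σ : Fin n → ℂ) :
    idftRow n σ = (n : ℂ)⁻¹ • ((dftMatrix n)ᴴ *ᵥ σ) := by
  ext j
  simp [idftRow, dftMatrix, fourierRoot, mulVec, dotProduct]

lemma idftRow_add (σ τ : Fin n → ℂ) : idftRow n (σ + τ) = idftRow n σ + idftRow n τ := by
  simp only [idftRow_eq_smul_mulVec, mulVec_add, smul_add]

lemma idftRow_sub (σ τ : Fin n → ℂ) : idftRow n (σ - τ) = idftRow n σ - idftRow n τ := by
  simp only [idftRow_eq_smul_mulVec, mulVec_sub, smul_sub]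

lemma idftRow_vecMul_dftMatrix [NeZero n] (σ : Fin n → ℂ) :
    idftRow n σ ᵥ* dftMatrix n = σ := by
  rw [← mulVec_transpose, dftMatrix_transpose, idftRow_eq_smul_mulVec, mulVec_smul,
    mulVec_mulVec, dftMatrix_mul_conjTranspose, smul_mulVec, one_mulVec, smul_smul,
    inv_mul_cancel₀ (NeZero.ne (n : ℂ)), one_smul]

lemma isUnit_det_dftMatrix [NeZero n] : IsUnit (dftMatrix n).det := by
  refine isUnit_det_of_right_inverse (B := (n : ℂ)⁻¹ • (dftMatrix n)ᴴ) ?_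
  rw [mul_smul_comm, dftMatrix_mul_conjTranspose, smul_smul, inv_mul_cancel₀ (NeZero.ne (n : ℂ)),
    one_smul]

lemma dftMatrix_add_apply [NeZero n] (i d k : Fin n) :
    dftMatrix n (i + d) k = dftMatrix n i k * dftMatrix n d k := by
  have hω := isPrimitiveRoot_fourierRoot (n := n)
  have pow_mod_n (a : ℕ) : fourierRoot n ^ (a % n) = fourierRoot n ^ a := by
    simpa only [← hω.eq_orderOf] using pow_mod_orderOf (fourierRoot n) a
  simp only [dftMatrix, of_apply, ← pow_add, ← add_mul]
  rw [← pow_mod_n, Fin.val_add, Nat.mod_mul_mod, pow_mod_n]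

lemma circ_mul_dftMatrix [NeZero n] (r : Fin n → ℂ) :
    circ r * dftMatrix n = dftMatrix n * diagonal (r ᵥ* dftMatrix n) := by
  ext i k
  rw [mul_apply, mul_diagonal, vecMul, dotProduct, Finset.mul_sum]
  refine (Fintype.sum_equiv (Equiv.addLeft i) _ _ fun d => ?_).symm
  simp only [circ, of_apply, Equiv.coe_addLeft, add_sub_cancel_left, dftMatrix_add_apply]
  ring

lemma circ_idftRow_mul_dftMatrix [NeZero n] (σ : Fin n → ℂ) :
    circ (idftRow n σ) * dftMatrix n = dftMatrix n * diagonal σ := by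
  rw [circ_mul_dftMatrix, idftRow_vecMul_dftMatrix]

lemma roots_charpoly_circ_idftRow [NeZero n] (σ : Fin n → ℂ) :
    (circ (idftRow n σ)).charpoly.roots = Finset.univ.val.map σ :=
  roots_charpoly_of_mul_eq_mul_diagonal isUnit_det_dftMatrix (circ_idftRow_mul_dftMatrix σ)

end DFT


section SumDiffBlock

variable {K N : Type*} [Field K]

def sumDiffBlock (S C : Matrix N N K) : Matrix (N × Fin 2) (N × Fin 2) K :=
  of fun x y => if x.2 = y.2 then (S x.1 y.1 + C x.1 y.1) / 2 else (S x.1 y.1 - C x.1 y.1) / 2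

lemma sumDiffBlock_eq_kronecker (S C : Matrix N N K) :
    sumDiffBlock S C = (2 : K)⁻¹ • (S ⊗ₖ !![1, 1; 1, 1] + C ⊗ₖ !![1, -1; -1, 1]) := by
  ext ⟨i, p⟩ ⟨j, q⟩
  fin_cases p <;> fin_cases q <;> simp [sumDiffBlock] <;> ring

lemma diagonal_prod_fin_two [DecidableEq N] (s c : N → K) :
    diagonal (fun x : N × Fin 2 => ![s, c] x.2 x.1) =
      diagonal s ⊗ₖ !![1, 0; 0, 0] + diagonal c ⊗ₖ !![0, 0; 0, 1] := by
  ext ⟨i, p⟩ ⟨j, q⟩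
  by_cases hij : i = j
  · subst hij; fin_cases p <;> fin_cases q <;> simp
  · fin_cases p <;> fin_cases q <;> simp [hij]

lemma sumDiffBlock_mul_kronecker [NeZero (2 : K)] [Fintype N] [DecidableEq N]
    {S C P : Matrix N N K} {s c : N → K}
    (hS : S * P = P * diagonal s) (hC : C * P = P * diagonal c) :
    sumDiffBlock S C * (P ⊗ₖ !![1, 1; 1, -1]) =
      (P ⊗ₖ !![1, 1; 1, -1]) * diagonal (fun x : N × Fin 2 => ![s, c] x.2 x.1) := by
  have h2 : (2 : K)⁻¹ * 2 = 1 := inv_mul_cancel₀ (NeZero.ne 2)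
  have hJ : (2 : K)⁻¹ • (!![1, 1; 1, 1] * !![1, 1; 1, -1]) =
      !![1, 1; 1, -1] * !![(1 : K), 0; 0, 0] := by
    ext a b; fin_cases a <;> fin_cases b <;> simp [mul_apply, one_add_one_eq_two, h2]
  have hH : (2 : K)⁻¹ • (!![1, -1; -1, 1] * !![1, 1; 1, -1]) =
      !![1, 1; 1, -1] * !![(0 : K), 0; 0, 1] := by
    ext a b; fin_cases a <;> fin_cases b <;>
      simp [mul_apply, one_add_one_eq_two, ← neg_add, h2]
  rw [sumDiffBlock_eq_kronecker, diagonal_prod_fin_two, smul_mul, add_mul,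
    ← mul_kronecker_mul, ← mul_kronecker_mul, hS, hC, smul_add, ← kronecker_smul,
    ← kronecker_smul, hJ, hH, mul_kronecker_mul, mul_kronecker_mul, mul_add]

lemma isUnit_det_kronecker_hadamard [NeZero (2 : K)] [Fintype N] [DecidableEq N]
    {P : Matrix N N K} (hP : IsUnit P.det) :
    IsUnit (P ⊗ₖ !![(1 : K), 1; 1, -1]).det := by
  have hU : (1 * -1 - 1 * 1 : K) = -2 := by ring
  rw [det_kronecker, det_fin_two_of, hU]
  exact (hP.pow _).mul ((isUnit_iff_ne_zero.mpr (neg_ne_zero.mpr (NeZero.ne 2))).pow _)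

end SumDiffBlock

lemma map_univ_prod_fin_two {N α : Type*} [Fintype N] (s c : N → α) :
    Finset.univ.val.map (fun x : N × Fin 2 => ![s, c] x.2 x.1) =
      Finset.univ.val.map s + Finset.univ.val.map c := by
  have h {ι : Type _} [Fintype ι] (d : ι → α) : Finset.univ.val.map d = ∑ x, {d x} :=
    (Multiset.sum_map_singleton _).symm.trans (by rw [Multiset.map_map]; rfl)
  rw [h, h s, h c, Fintype.sum_prod_type, ← Finset.sum_add_distrib]
  simp [Fin.sum_univ_two]

lemma roots_charpoly_sumDiffBlock {K N : Type*} [Field K] [NeZero (2 : K)] [Fintype N]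
    [DecidableEq N] {S C P : Matrix N N K} {s c : N → K} (hP : IsUnit P.det)
    (hS : S * P = P * diagonal s) (hC : C * P = P * diagonal c) :
    (sumDiffBlock S C).charpoly.roots = Finset.univ.val.map s + Finset.univ.val.map c := by
  rw [roots_charpoly_of_mul_eq_mul_diagonal (isUnit_det_kronecker_hadamard hP)
    (sumDiffBlock_mul_kronecker hS hC), map_univ_prod_fin_two]

section CircBlock

variable {n : ℕ} [NeZero n] (r r' : Fin n → ℂ)

lemma sumDiffBlock_circ_apply (i j : Fin n) (p q : Fin 2) :
    sumDiffBlock (circ r) (circ r') (i, p) (j, q) =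
      sumDiffBlock (circ r) (circ r') (0, 0) (j - i, q - p) := by
  simp [sumDiffBlock, circ, sub_eq_zero, eq_comm]

lemma exists_perm_sumDiffBlock_circ (u : Fin n × Fin 2) :
    ∃ e : Equiv.Perm (Fin n × Fin 2),
      ∀ v, sumDiffBlock (circ r) (circ r') u v = sumDiffBlock (circ r) (circ r') (0, 0) (e v) :=
  ⟨(Equiv.subRight u.1).prodCongr (Equiv.subRight u.2),
    fun v => sumDiffBlock_circ_apply r r' u.1 v.1 u.2 v.2⟩

end CircBlock

lemma sumDiffBlock_circ_nonneg {n : ℕ} {r r' : Fin n → ℂ} (hadd : 0 ≤ r + r') (hsub : 0 ≤ r - r')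
    (u v : Fin n × Fin 2) :
    0 ≤ sumDiffBlock (circ r) (circ r') u v := by
  simp only [sumDiffBlock, circ, of_apply]
  split_ifs
  · exact div_nonneg (hadd (v.1 - u.1)) zero_le_two
  · exact div_nonneg (hsub (v.1 - u.1)) zero_le_two

noncomputable def guoPerturbation (m : ℕ) (τ ε : ℝ) : Fin (2 * m + 2) → ℂ :=
  Pi.single 0 (τ : ℂ) + Pi.single ⟨m + 1, by omega⟩ ((ε * τ : ℝ) : ℂ)

lemma guoPerturbation_add (m : ℕ) (τ τ' ε : ℝ) :
    guoPerturbation m (τ + τ') ε = guoPerturbation m τ ε + guoPerturbation m τ' ε := by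
  simp only [guoPerturbation, mul_add, ofReal_add, Pi.single_add]
  abel

lemma guoPerturbation_sub (m : ℕ) (τ τ' ε : ℝ) :
    guoPerturbation m (τ - τ') ε = guoPerturbation m τ ε - guoPerturbation m τ' ε := by
  simp only [guoPerturbation, mul_sub, ofReal_sub, Pi.single_sub]
  abel

lemma eq_add_guoPerturbation {m : ℕ} {σ σ' : Fin (2 * m + 2) → ℂ} {τ ε : ℝ}
    (h : ∀ k, σ' k = σ k + (if (k : ℕ) = 0 then (τ : ℂ) else 0)
      + (if (k : ℕ) = m + 1 then ((ε * τ : ℝ) : ℂ) else 0)) :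
    σ' = σ + guoPerturbation m τ ε := by
  ext k
  simp only [h, guoPerturbation, Pi.add_apply, Pi.single_apply, Fin.ext_iff, Fin.val_zero,
    add_assoc]

lemma fourierRoot_pow_half (m : ℕ) : fourierRoot (2 * m + 2) ^ (m + 1) = -1 := by
  have h := (isPrimitiveRoot_fourierRoot (n := 2 * m + 2)).pow_of_dvd m.add_one_ne_zero
    ⟨2, by ring⟩
  rw [show (2 * m + 2) / (m + 1) = 2 by rw [show 2 * m + 2 = (m + 1) * 2 by ring,
    Nat.mul_div_cancel_left 2 m.succ_pos]] at h
  exact h.eq_neg_one_of_two_right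

lemma idftRow_single {n : ℕ} (k : Fin n) (a : ℂ) (j : Fin n) :
    idftRow n (Pi.single k a) j = star (dftMatrix n k j) * a / n := by
  simp [idftRow_eq_smul_mulVec, mulVec_single, div_eq_inv_mul, mul_comm]

lemma idftRow_guoPerturbation (m : ℕ) (τ ε : ℝ) (j : Fin (2 * m + 2)) :
    idftRow _ (guoPerturbation m τ ε) j =
      ((τ * (1 + ε * (-1) ^ (j : ℕ)) / (2 * m + 2) : ℝ) : ℂ) := by
  rw [guoPerturbation, idftRow_add, Pi.add_apply, idftRow_single, idftRow_single]
  simp only [dftMatrix, of_apply, Fin.val_zero, pow_zero, star_one, pow_mul,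
    fourierRoot_pow_half, star_pow, star_neg]
  push_cast
  ring

lemma idftRow_guoPerturbation_nonneg (m : ℕ) {τ ε : ℝ} (hε : ε = 1 ∨ ε = -1) (hτ : 0 ≤ τ) :
    0 ≤ idftRow _ (guoPerturbation m τ ε) := by
  intro j
  rw [Pi.zero_apply, idftRow_guoPerturbation, zero_le_real]
  have hsign : 0 ≤ 1 + ε * (-1) ^ (j : ℕ) := by
    rcases hε with rfl | rfl <;> rcases neg_one_pow_eq_or ℝ j with h | h <;> rw [h] <;> norm_num
  positivity

lemma idftRow_add_guoPerturbation_nonneg {m : ℕ} {σ : Fin (2 * m + 2) → ℂ} {τ ε : ℝ}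
    (hσ : 0 ≤ idftRow _ σ) (hε : ε = 1 ∨ ε = -1) (hτ : 0 ≤ τ) :
    0 ≤ idftRow _ (σ + guoPerturbation m τ ε) := by
  rw [idftRow_add]
  exact add_nonneg hσ (idftRow_guoPerturbation_nonneg m hε hτ)

lemma nn_iff_nonneg {z : ℂ} : NN z ↔ 0 ≤ z := by
  rw [NN, nonneg_iff, eq_comm, and_comm]

end Stmt18

open ComplexOrder in
/-- Guo perturbations of the spectra of real nonnegative circulant
matrices S and C (with S, S+C, S−C nonnegative), with t₁ ≥ |t₂|, yield nonnegative
circulant matrices S̃, S̃+C̃, S̃−C̃ and a nonnegative permutative 2n×2n block matrix M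
realizing σ_{s,t₁} ∪ σ_{c,t₂}. Here n = 2m+2, lists are in Fourier ordering (0-indexed:
position 0 gets +t, position m+1 gets ±t with a common sign ε). -/
theorem stmt18 (m : ℕ) (σ₁ σ₂ : Fin (2 * m + 2) → ℂ)
    (hS : ∀ j, NN (idftRow _ σ₁ j))
    (hSpC : ∀ j, NN (idftRow _ σ₁ j + idftRow _ σ₂ j))
    (hSmC : ∀ j, NN (idftRow _ σ₁ j - idftRow _ σ₂ j))
    (t₁ t₂ : ℝ) (ht : |t₂| ≤ t₁)
    (ε : ℝ) (hε : ε = 1 ∨ ε = -1)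
    (σs σc : Fin (2 * m + 2) → ℂ)
    (hσs : ∀ k, σs k = σ₁ k + (if (k : ℕ) = 0 then (t₁ : ℂ) else 0)
      + (if (k : ℕ) = m + 1 then ((ε * t₁ : ℝ) : ℂ) else 0))
    (hσc : ∀ k, σc k = σ₂ k + (if (k : ℕ) = 0 then (t₂ : ℂ) else 0)
      + (if (k : ℕ) = m + 1 then ((ε * t₂ : ℝ) : ℂ) else 0))
    (M : Matrix (Fin (2 * m + 2) × Fin 2) (Fin (2 * m + 2) × Fin 2) ℂ)
    (hM : ∀ (i j : Fin (2 * m + 2)) (p q : Fin 2), M (i, p) (j, q) =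
      if p = q then (circ (idftRow _ σs) i j + circ (idftRow _ σc) i j) / 2
      else (circ (idftRow _ σs) i j - circ (idftRow _ σc) i j) / 2) :
    (∀ j, NN (idftRow _ σs j)) ∧
    (∀ j, NN (idftRow _ σs j + idftRow _ σc j)) ∧
    (∀ j, NN (idftRow _ σs j - idftRow _ σc j)) ∧
    (circ (idftRow _ σs)).charpoly.roots = Finset.univ.val.map σs ∧
    (circ (idftRow _ σc)).charpoly.roots = Finset.univ.val.map σc ∧
    (∀ u v, NN (M u v)) ∧
    (∀ u : Fin (2 * m + 2) × Fin 2, ∃ π : Equiv.Perm (Fin (2 * m + 2) × Fin 2),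
      ∀ v, M u v = M (⟨0, by omega⟩, 0) (π v)) ∧
    M.charpoly.roots = Finset.univ.val.map σs + Finset.univ.val.map σc := by
  simp only [nn_iff_nonneg] at hS hSpC hSmC ⊢
  obtain ⟨ht₁, hplus, hminus⟩ : 0 ≤ t₁ ∧ 0 ≤ t₁ + t₂ ∧ 0 ≤ t₁ - t₂ := by
    have := abs_le.mp ht
    refine ⟨?_, ?_, ?_⟩ <;> linarith [abs_nonneg t₂]
  have hs : 0 ≤ idftRow _ σs := by
    rw [eq_add_guoPerturbation hσs]
    exact idftRow_add_guoPerturbation_nonneg hS hε ht₁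
  have hadd : 0 ≤ idftRow _ σs + idftRow _ σc := by
    rw [← idftRow_add, eq_add_guoPerturbation hσs, eq_add_guoPerturbation hσc,
      add_add_add_comm, ← guoPerturbation_add]
    exact idftRow_add_guoPerturbation_nonneg (by rw [idftRow_add]; exact hSpC) hε hplus
  have hsub : 0 ≤ idftRow _ σs - idftRow _ σc := by
    rw [← idftRow_sub, eq_add_guoPerturbation hσs, eq_add_guoPerturbation hσc,
      add_sub_add_comm, ← guoPerturbation_sub]
    exact idftRow_add_guoPerturbation_nonneg (by rw [idftRow_sub]; exact hSmC) hε hminus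
  obtain rfl : M = sumDiffBlock (circ (idftRow _ σs)) (circ (idftRow _ σc)) := by
    ext ⟨i, p⟩ ⟨j, q⟩
    exact hM i j p q
  exact ⟨hs, hadd, hsub, roots_charpoly_circ_idftRow σs, roots_charpoly_circ_idftRow σc,
    sumDiffBlock_circ_nonneg hadd hsub, exists_perm_sumDiffBlock_circ _ _,
    roots_charpoly_sumDiffBlock isUnit_det_dftMatrix (circ_idftRow_mul_dftMatrix σs)
      (circ_idftRow_mul_dftMatrix σc)⟩
end
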